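/- For every (x,v) ∈ ℝ³ × ℝ³ with v₁² + v₂² + v₃² = 1 and v₃² ≠ 1, the Lie bracket [X̃₁, X̃₀] evaluated at (x,v) equals (−sin x₃, cos x₃, 0, 0, 0, 0) + (v₃²(v₁ cos x₃ + v₂ sin x₃)/√(1−v₃²)) · (0, 0, 0, e₄(v)) + (v₃(v₂ cos x₃ − v₁ sin x₃)/√(1−v₃²)) · (0, 0, 0, e₅(v)). -/

import Mathlib

/-!
`X̃₁` is constant, so `[X̃₁, X̃₀]` is the derivative of `X̃₀` in the `x₃`-direction, and `X̃₀`
depends on `x` only through `θ = x₃`. The velocity part of `X̃₀` is `w - ⟨w, v⟩ v` with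
`w = v₃ (-sin θ, cos θ, 0)`, the projection of `w` onto the tangent plane of the unit sphere at
`v`; its `θ`-derivative is the projection of `∂_θ w = -v₃ (cos θ, sin θ, 0)`, and the coefficients
of that tangent vector in the orthonormal frame `e₄(v), e₅(v)` are its inner products with them.
-/

/-- The phase space `ℝ³ × ℝ³` with coordinates `(x₁,x₂,x₃,v₁,v₂,v₃)`. -/
abbrev E6 : Type := (Fin 3 → ℝ) × (Fin 3 → ℝ)

/-- The Lie bracket of two vector fields on a normed space:
`[V,W](x) = DW(x)·V(x) − DV(x)·W(x)`. -/
noncomputable def lieBracket {E : Type*} [NormedAddCommGroup E] [NormedSpace ℝ E]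
    (V W : E → E) : E → E :=
  fun x => fderiv ℝ W x (V x) - fderiv ℝ V x (W x)

/-- The drift vector field `X̃₀` of the projective process. -/
noncomputable def Xt0 : E6 → E6 := fun w =>
  let x := w.1; let v := w.2
  let α : ℝ := -(v 2) * v 0 * Real.sin (x 2) + v 2 * v 1 * Real.cos (x 2)
  (![Real.cos (x 2), Real.sin (x 2), 1],
   ![-(v 2) * Real.sin (x 2) - α * v 0, v 2 * Real.cos (x 2) - α * v 1, -(α * v 2)])

/-- The vector field `X̃₁ = (0,0,1,0,0,0)`. -/
noncomputable def Xt1 : E6 → E6 := fun _ => (![0, 0, 1], ![0, 0, 0])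

/-- The common shape of `X̃₂,…,X̃₅`. -/
noncomputable def XtGen (B : (Fin 3 → ℝ) → ℝ) (c : E6 → ℝ) : E6 → E6 := fun w =>
  let v := w.2
  (![0, 0, B w.1],
   ![c w * (-(v 2) * v 0), c w * (-(v 2) * v 1), c w * (1 - (v 2) ^ 2)])

noncomputable def Xt2 : E6 → E6 :=
  XtGen (fun x => Real.sin (x 0)) (fun w => w.2 0 * Real.cos (w.1 0))

noncomputable def Xt3 : E6 → E6 :=
  XtGen (fun x => Real.cos (x 0)) (fun w => -(w.2 0) * Real.sin (w.1 0))

noncomputable def Xt4 : E6 → E6 :=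
  XtGen (fun x => Real.sin (x 1)) (fun w => w.2 1 * Real.cos (w.1 1))

noncomputable def Xt5 : E6 → E6 :=
  XtGen (fun x => Real.cos (x 1)) (fun w => -(w.2 1) * Real.sin (w.1 1))

/-- `e₄(v) = (1/√(1−v₃²))·(−v₃v₁, −v₃v₂, 1−v₃²)`. -/
noncomputable def e₄ (v : Fin 3 → ℝ) : Fin 3 → ℝ :=
  (Real.sqrt (1 - (v 2) ^ 2))⁻¹ • ![-(v 2) * v 0, -(v 2) * v 1, 1 - (v 2) ^ 2]

/-- `e₅(v) = (1/√(1−v₃²))·(−v₂, v₁, 0)`. -/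
noncomputable def e₅ (v : Fin 3 → ℝ) : Fin 3 → ℝ :=
  (Real.sqrt (1 - (v 2) ^ 2))⁻¹ • ![-(v 1), v 0, 0]

open Real

theorem lieBracket_const_left {E : Type*} [NormedAddCommGroup E] [NormedSpace ℝ E]
    (c : E) (W : E → E) (p : E) : lieBracket (fun _ => c) W p = fderiv ℝ W p c := by
  simp [lieBracket]

theorem fderiv_apply_eq_of_hasLineDerivAt {E F : Type*} [NormedAddCommGroup E] [NormedSpace ℝ E]
    [NormedAddCommGroup F] [NormedSpace ℝ F] {W : E → F} {p u : E} {w : F}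
    (hW : DifferentiableAt ℝ W p) (h : HasLineDerivAt ℝ W w p u) : fderiv ℝ W p u = w :=
  (hW.hasFDerivAt.hasLineDerivAt u).unique h

noncomputable def drift (θ : ℝ) (v : Fin 3 → ℝ) : E6 :=
  let α : ℝ := -(v 2) * v 0 * sin θ + v 2 * v 1 * cos θ
  (![cos θ, sin θ, 1], ![-(v 2) * sin θ - α * v 0, v 2 * cos θ - α * v 1, -(α * v 2)])

noncomputable def driftDeriv (θ : ℝ) (v : Fin 3 → ℝ) : E6 :=
  let α' : ℝ := -(v 2) * v 0 * cos θ - v 2 * v 1 * sin θ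
  (![-sin θ, cos θ, 0], ![-(v 2) * cos θ - α' * v 0, v 2 * -sin θ - α' * v 1, -(α' * v 2)])

theorem Xt0_eq_drift (w : E6) : Xt0 w = drift (w.1 2) w.2 := rfl

theorem hasDerivAt_drift (θ : ℝ) (v : Fin 3 → ℝ) :
    HasDerivAt (fun θ => drift θ v) (driftDeriv θ v) θ := by
  have hα : HasDerivAt (fun θ => -(v 2) * v 0 * sin θ + v 2 * v 1 * cos θ)
      (-(v 2) * v 0 * cos θ - v 2 * v 1 * sin θ) θ :=
    (((hasDerivAt_sin θ).const_mul (-(v 2) * v 0)).add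
      ((hasDerivAt_cos θ).const_mul (v 2 * v 1))).congr_deriv (by ring)
  refine .prodMk (hasDerivAt_pi.mpr fun i => ?_) (hasDerivAt_pi.mpr fun i => ?_) <;> fin_cases i
  · exact hasDerivAt_cos θ
  · exact hasDerivAt_sin θ
  · exact hasDerivAt_const θ 1
  · exact ((hasDerivAt_sin θ).const_mul (-(v 2))).sub (hα.mul_const (v 0))
  · exact ((hasDerivAt_cos θ).const_mul (v 2)).sub (hα.mul_const (v 1))
  · exact (hα.mul_const (v 2)).neg

theorem differentiable_Xt0 : Differentiable ℝ Xt0 := by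
  refine fun w => .prodMk (differentiableAt_pi.mpr fun i => ?_)
    (differentiableAt_pi.mpr fun i => ?_) <;> fin_cases i <;>
    simp only [Fin.zero_eta, Fin.mk_one, Fin.reduceFinMk, Matrix.cons_val] <;> fun_prop

theorem hasLineDerivAt_Xt0 (x v : Fin 3 → ℝ) :
    HasLineDerivAt ℝ Xt0 (driftDeriv (x 2) v) (x, v) (![0, 0, 1], ![0, 0, 0]) := by
  have hline : (fun t : ℝ => Xt0 ((x, v) + t • (![0, 0, 1], ![0, 0, 0]))) =
      fun t => drift (x 2 + t) v := by
    funext t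
    rw [Xt0_eq_drift]
    congr 1
    · simp [Matrix.vecHead, Matrix.vecTail]
    · simp only [Prod.snd_add, Prod.smul_snd, ← Matrix.zero_empty, Matrix.cons_zero_zero, smul_zero,
        add_zero]
  have := (hasDerivAt_drift (x 2 + 0) v).comp_const_add (x 2) 0
  rwa [add_zero, ← hline] at this

theorem lieBracket_Xt1_Xt0 (x v : Fin 3 → ℝ) : lieBracket Xt1 Xt0 (x, v) = driftDeriv (x 2) v :=
  (lieBracket_const_left _ Xt0 (x, v)).trans <|
    fderiv_apply_eq_of_hasLineDerivAt (differentiable_Xt0 _) (hasLineDerivAt_Xt0 x v)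

theorem driftDeriv_eq_frame (θ : ℝ) {v : Fin 3 → ℝ}
    (hv : (v 0) ^ 2 + (v 1) ^ 2 + (v 2) ^ 2 = 1) (hv3 : (v 2) ^ 2 ≠ 1) :
    driftDeriv θ v
      = ((![-sin θ, cos θ, 0], ![0, 0, 0]) : E6)
        + ((v 2) ^ 2 * (v 0 * cos θ + v 1 * sin θ) / √(1 - (v 2) ^ 2)) • ((![0, 0, 0], e₄ v) : E6)
        + (v 2 * (v 1 * cos θ - v 0 * sin θ) / √(1 - (v 2) ^ 2)) • ((![0, 0, 0], e₅ v) : E6) := by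
  have hpos : 0 < 1 - (v 2) ^ 2 := by
    have : (v 2) ^ 2 ≤ 1 := by nlinarith [sq_nonneg (v 0), sq_nonneg (v 1)]
    exact sub_pos.mpr (lt_of_le_of_ne this hv3)
  have hsqrt : √(1 - (v 2) ^ 2) ≠ 0 := (sqrt_pos.mpr hpos).ne'
  refine Prod.ext (funext fun i => ?_) (funext fun i => ?_) <;> fin_cases i <;>
    simp only [driftDeriv, e₄, e₅, Prod.smul_mk, Matrix.smul_cons, Matrix.smul_empty, smul_eq_mul,
      Prod.mk_add_mk, Matrix.add_cons, Matrix.empty_add_empty, Fin.zero_eta, Fin.mk_one,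
      Fin.reduceFinMk, Matrix.cons_val, Matrix.head_cons, Matrix.tail_cons, mul_zero, add_zero,
      zero_add] <;>
    field_simp <;> rw [sq_sqrt hpos.le]
  · linear_combination (v 2 * cos θ) * hv
  · linear_combination (v 2 * sin θ) * hv
  · ring

/-- For `(x,v)` with `|v| = 1` and `v₃² ≠ 1`,
`[X̃₁, X̃₀](x,v) = (−sin x₃, cos x₃, 0, 0, 0, 0)
  + (v₃²(v₁ cos x₃ + v₂ sin x₃)/√(1−v₃²))·(0,0,0,e₄(v))
  + (v₃(v₂ cos x₃ − v₁ sin x₃)/√(1−v₃²))·(0,0,0,e₅(v))`. -/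
theorem statement5 (x v : Fin 3 → ℝ)
    (hv : (v 0) ^ 2 + (v 1) ^ 2 + (v 2) ^ 2 = 1) (hv3 : (v 2) ^ 2 ≠ 1) :
    lieBracket Xt1 Xt0 (x, v)
      = ((![-Real.sin (x 2), Real.cos (x 2), 0], ![0, 0, 0]) : E6)
        + ((v 2) ^ 2 * (v 0 * Real.cos (x 2) + v 1 * Real.sin (x 2)) / Real.sqrt (1 - (v 2) ^ 2))
            • ((![0, 0, 0], e₄ v) : E6)
        + (v 2 * (v 1 * Real.cos (x 2) - v 0 * Real.sin (x 2)) / Real.sqrt (1 - (v 2) ^ 2))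
            • ((![0, 0, 0], e₅ v) : E6) := by
  rw [lieBracket_Xt1_Xt0, driftDeriv_eq_frame _ hv hv3]
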